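/- For a prime power q, the set of prime divisors of q^2 - 1 has cardinality at most 2 if and only if q ∈ {2, 3, 4, 5, 7, 8, 9, 17}. -/

import Mathlib

/-!
For q = 2ⁿ the factors 2ⁿ - 1 and 2ⁿ + 1 of q² - 1 are coprime; for odd q = 2m + 1,
q² - 1 = 4m(m + 1) has the prime factors of the coprime numbers m and m + 1, one of which is even.
So at most two prime factors forces 2ⁿ ∓ 1, resp. m and m + 1, to be prime powers; the even one
of m, m + 1 is then a power of two 2ᵃ, and 2ᵃ ± 1 and q = 2ᵃ⁺¹ ± 1 are both prime powers.

A prime power pᵉ = 2ᵏ ± 1 with e > 1 almost never exists: for odd e the cofactor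
(pᵉ ∓ 1)/(p ∓ 1) is an odd divisor of 2ᵏ, hence 1; for even e, 2ᵏ - 1 is not a square mod 4 and
(pᵉᐟ² - 1)(pᵉᐟ² + 1) = 2ᵏ forces pᵉ = 9. Hence 2ᵏ - 1 a prime power means k is prime, and 2ᵏ + 1 a
prime power means k = 3 or k is a power of two; only finitely many exponents survive.
-/

open Finset

namespace Int

lemma odd_geom_sum₂ {x y : ℤ} {e : ℕ} (hx : Odd x) (hy : Odd y) (he : Odd e) :
    Odd (∑ i ∈ Finset.range e, x ^ i * y ^ (e - 1 - i)) := by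
  rw [← ZMod.intCast_eq_one_iff_odd]
  push_cast
  simp [hx.intCast_zmod_two, hy.intCast_zmod_two, he.natCast_zmod_two]

lemma pow_sub_pow_eq_abs_sub_of_eq_two_pow {x y : ℤ} {e k : ℕ} (hx : Odd x) (hy : Odd y)
    (he : Odd e) (h : x ^ e - y ^ e = 2 ^ k) : x ^ e - y ^ e = |x - y| := by
  set S := ∑ i ∈ Finset.range e, x ^ i * y ^ (e - 1 - i)
  have hS : S * (x - y) = x ^ e - y ^ e := geom_sum₂_mul x y e
  have hS_dvd : S.natAbs ∣ 2 ^ k := by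
    simpa [Int.natAbs_pow] using Int.natAbs_dvd_natAbs.mpr (Dvd.intro _ (hS.trans h))
  have hS_one : S.natAbs = 1 :=
    ((Nat.coprime_two_right.mpr (natAbs_odd.mpr (odd_geom_sum₂ hx hy he))).pow_right k
      ).eq_one_of_dvd hS_dvd
  calc x ^ e - y ^ e = |x ^ e - y ^ e| := by rw [h, abs_of_pos (by positivity)]
    _ = |x - y| := by rw [← hS, abs_mul, abs_eq_natAbs S, hS_one, Nat.cast_one, one_mul]

end Int

lemma IsPrimePow.exists_eq_two_pow_of_even {n : ℕ} (hn : IsPrimePow n) (he : Even n) :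
    ∃ k, n = 2 ^ k := by
  obtain ⟨p, k, hp, -, rfl⟩ := (isPrimePow_nat_iff n).mp hn
  obtain rfl := (Nat.prime_dvd_prime_iff_eq Nat.prime_two hp).mp
    (Nat.prime_two.dvd_of_dvd_pow he.two_dvd)
  exact ⟨k, rfl⟩

namespace Nat

lemma Coprime.card_primeFactors_mul {a b : ℕ} (hab : Coprime a b) :
    (a * b).primeFactors.card = a.primeFactors.card + b.primeFactors.card := by
  rw [hab.primeFactors_mul, card_union_of_disjoint hab.disjoint_primeFactors]

lemma card_primeFactors_sq_sub_one_of_even {q : ℕ} (hq : Even q) :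
    (q ^ 2 - 1).primeFactors.card = (q - 1).primeFactors.card + (q + 1).primeFactors.card := by
  rcases q.eq_zero_or_pos with rfl | hq₀
  · simp
  have hcop : Coprime (q - 1) (q + 1) := by
    rw [show q + 1 = q - 1 + 2 by omega, coprime_self_add_right, coprime_two_right]
    exact Nat.Even.sub_odd hq₀ hq odd_one
  rw [← hcop.card_primeFactors_mul, mul_comm, ← Nat.sq_sub_sq, one_pow]

lemma card_primeFactors_sq_sub_one_of_odd (m : ℕ) :
    ((2 * m + 1) ^ 2 - 1).primeFactors.card =
      m.primeFactors.card + (m + 1).primeFactors.card := by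
  rcases m.eq_zero_or_pos with rfl | hm
  · simp
  have hsq : (2 * m + 1) ^ 2 - 1 = 2 ^ 2 * (m * (m + 1)) := by
    rw [Nat.sub_eq_of_eq_add]; ring
  have h2 : 2 ∈ (m * (m + 1)).primeFactors :=
    mem_primeFactors.mpr ⟨prime_two, (even_mul_succ_self m).two_dvd, by positivity⟩
  rw [hsq, primeFactors_mul (by norm_num) (by positivity),
    primeFactors_prime_pow two_ne_zero prime_two, union_eq_right.mpr (singleton_subset_iff.mpr h2),
    (coprime_self_add_right.mpr (coprime_one_right m)).card_primeFactors_mul]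

lemma isPrimePow_of_card_primeFactors_add_le_two {a b : ℕ} (ha : 2 ≤ a) (hb : 2 ≤ b)
    (h : a.primeFactors.card + b.primeFactors.card ≤ 2) : IsPrimePow a ∧ IsPrimePow b := by
  have ha₁ := Finset.card_pos.mpr (nonempty_primeFactors.mpr ha)
  have hb₁ := Finset.card_pos.mpr (nonempty_primeFactors.mpr hb)
  exact ⟨isPrimePow_iff_card_primeFactors_eq_one.mpr (by omega),
    isPrimePow_iff_card_primeFactors_eq_one.mpr (by omega)⟩

lemma eq_one_of_pow_add_one_eq_two_pow {x e k : ℕ} (hx : Odd x) (hx₁ : 1 < x) (he : Odd e)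
    (h : x ^ e + 1 = 2 ^ k) : e = 1 := by
  have := Int.pow_sub_pow_eq_abs_sub_of_eq_two_pow (y := -1) (k := k) (hx.natCast (R := ℤ))
    (by decide) he (by rw [he.neg_one_pow, sub_neg_eq_add]; exact_mod_cast h)
  rw [he.neg_one_pow, sub_neg_eq_add, sub_neg_eq_add, abs_of_pos (by positivity)] at this
  exact (pow_eq_self_iff hx₁).mp (by exact_mod_cast add_right_cancel this)

lemma eq_one_of_pow_eq_two_pow_add_one {x e k : ℕ} (hx : Odd x) (hx₁ : 1 < x) (he : Odd e)
    (h : x ^ e = 2 ^ k + 1) : e = 1 := by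
  have hZ : (x : ℤ) ^ e = 2 ^ k + 1 := by exact_mod_cast h
  have := Int.pow_sub_pow_eq_abs_sub_of_eq_two_pow (y := 1) (k := k) (hx.natCast (R := ℤ))
    odd_one he (by rw [hZ, one_pow, add_sub_cancel_right])
  rw [one_pow, abs_of_pos (by omega)] at this
  exact (pow_eq_self_iff hx₁).mp (by exact_mod_cast sub_left_injective this)

lemma eq_one_of_two_pow_add_two_eq_two_pow {a b : ℕ} (h : 2 ^ a + 2 = 2 ^ b) : a = 1 := by
  have ha := a.one_le_two_pow
  rcases a with _ | _ | a <;> rcases b with _ | _ | b <;>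
    (try simp only [pow_succ, pow_zero] at h ha) <;> omega

lemma eq_three_of_sq_eq_two_pow_add_one {y k : ℕ} (h : y ^ 2 = 2 ^ k + 1) : y = 3 := by
  have hy : y ≠ 0 := by rintro rfl; simp at h
  have hmul : (y + 1) * (y - 1) = 2 ^ k := by rw [← one_pow 2, ← Nat.sq_sub_sq, h]; simp
  obtain ⟨a, -, ha⟩ := (dvd_prime_pow prime_two).mp (Dvd.intro_left _ hmul)
  obtain ⟨b, -, hb⟩ := (dvd_prime_pow prime_two).mp (Dvd.intro _ hmul)
  have := eq_one_of_two_pow_add_two_eq_two_pow (a := a) (b := b) (by omega)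
  subst this
  omega

lemma prime_of_isPrimePow_two_pow_sub_one {k : ℕ} (hk : 2 ≤ k) (h : IsPrimePow (2 ^ k - 1)) :
    k.Prime := by
  obtain ⟨p, e, hp, he₀, hpe⟩ := (isPrimePow_nat_iff _).mp h
  have h4 : 4 ∣ 2 ^ k := pow_dvd_pow 2 hk
  have h4' : 4 ≤ 2 ^ k := le_of_dvd (by positivity) h4
  have hp_odd : Odd p := by
    refine (odd_pow_iff he₀.ne').mp ?_
    rw [hpe]
    exact Nat.Even.sub_odd (by omega) (even_iff_two_dvd.mpr (dvd_trans (by norm_num) h4)) odd_one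
  have he : Odd e := by
    rcases Nat.even_or_odd e with ⟨f, rfl⟩ | he
    · obtain ⟨t, ht⟩ := hp_odd.pow (n := f)
      rw [← two_mul, pow_mul', ht] at hpe
      have : (2 * t + 1) ^ 2 = 4 * (t * t + t) + 1 := by ring
      omega
    · exact he
  obtain rfl := eq_one_of_pow_add_one_eq_two_pow (k := k) hp_odd hp.one_lt he (by omega)
  exact (prime_of_pow_sub_one_prime (by omega) (by rwa [← hpe, pow_one])).2

lemma eq_three_or_eq_two_pow_of_isPrimePow_two_pow_add_one {k : ℕ} (hk : k ≠ 0)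
    (h : IsPrimePow (2 ^ k + 1)) : k = 3 ∨ ∃ i, k = 2 ^ i := by
  obtain ⟨p, e, hp, he₀, hpe⟩ := (isPrimePow_nat_iff _).mp h
  have hp_odd : Odd p := by
    refine (odd_pow_iff he₀.ne').mp ?_
    rw [hpe]
    exact (Nat.even_pow.mpr ⟨even_two, hk⟩).add_one
  rcases Nat.even_or_odd e with ⟨f, rfl⟩ | he
  · left
    rw [← two_mul, pow_mul'] at hpe
    have := eq_three_of_sq_eq_two_pow_add_one hpe
    rw [this] at hpe
    exact Nat.pow_right_injective le_rfl (by omega : 2 ^ k = 2 ^ 3)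
  · obtain rfl := eq_one_of_pow_eq_two_pow_add_one hp_odd hp.one_lt he hpe
    exact Or.inr (pow_of_pow_add_prime one_lt_two hk (by rwa [← hpe, pow_one]))

lemma eq_two_or_eq_three_of_isPrimePow_two_pow_sub_one_of_isPrimePow_two_pow_add_one {n : ℕ}
    (hn : 2 ≤ n) (h₁ : IsPrimePow (2 ^ n - 1)) (h₂ : IsPrimePow (2 ^ n + 1)) : n = 2 ∨ n = 3 := by
  have hn_prime := prime_of_isPrimePow_two_pow_sub_one hn h₁
  rcases eq_three_or_eq_two_pow_of_isPrimePow_two_pow_add_one (by omega) h₂ with rfl | ⟨i, rfl⟩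
  · exact Or.inr rfl
  · obtain ⟨-, rfl⟩ := hn_prime.pow_eq_iff.mp rfl
    exact Or.inl rfl

lemma le_three_of_isPrimePow_two_pow_add_one_of_isPrimePow_two_pow_succ_add_one {a : ℕ}
    (ha : a ≠ 0) (h₁ : IsPrimePow (2 ^ a + 1)) (h₂ : IsPrimePow (2 ^ (a + 1) + 1)) : a ≤ 3 := by
  rcases eq_three_or_eq_two_pow_of_isPrimePow_two_pow_add_one ha h₁ with rfl | ⟨i, rfl⟩
  · exact le_rfl
  rcases eq_three_or_eq_two_pow_of_isPrimePow_two_pow_add_one (succ_ne_zero _) h₂ with h | ⟨j, hj⟩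
  · omega
  rcases i with _ | i
  · simp
  rcases j with _ | j
  · simp at hj
  · rw [pow_succ, pow_succ] at hj
    omega

lemma eq_two_of_isPrimePow_two_pow_sub_one_of_isPrimePow_two_pow_succ_sub_one {a : ℕ}
    (ha : 2 ≤ a) (h₁ : IsPrimePow (2 ^ a - 1)) (h₂ : IsPrimePow (2 ^ (a + 1) - 1)) : a = 2 := by
  have ha_prime := prime_of_isPrimePow_two_pow_sub_one ha h₁
  have ha₁_prime := prime_of_isPrimePow_two_pow_sub_one (by omega) h₂
  rcases Nat.even_or_odd a with he | ho
  · exact (ha_prime.even_iff).mp he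
  · have := (ha₁_prime.even_iff).mp ho.add_one
    omega

lemma mem_of_card_primeFactors_sq_sub_one_le_two_of_even {q : ℕ} (hq : IsPrimePow q)
    (he : Even q) (h : (q ^ 2 - 1).primeFactors.card ≤ 2) : q ∈ ({2, 4, 8} : Finset ℕ) := by
  obtain ⟨n, rfl⟩ := hq.exists_eq_two_pow_of_even he
  rw [card_primeFactors_sq_sub_one_of_even he] at h
  obtain rfl | hn : n = 1 ∨ 2 ≤ n := by
    have := hq.one_lt
    rcases n with _ | n
    · simp at this
    · omega
  · simp
  have h4 : 4 ≤ 2 ^ n := by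
    calc 4 = 2 ^ 2 := rfl
      _ ≤ 2 ^ n := pow_le_pow_right₀ one_le_two hn
  obtain ⟨h₁, h₂⟩ := isPrimePow_of_card_primeFactors_add_le_two (by omega) (by omega) h
  rcases eq_two_or_eq_three_of_isPrimePow_two_pow_sub_one_of_isPrimePow_two_pow_add_one hn h₁ h₂
    with rfl | rfl <;> simp

lemma mem_of_card_primeFactors_sq_sub_one_le_two_of_odd {q : ℕ} (hq : IsPrimePow q)
    (ho : Odd q) (h : (q ^ 2 - 1).primeFactors.card ≤ 2) :
    q ∈ ({3, 5, 7, 9, 17} : Finset ℕ) := by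
  obtain ⟨m, rfl⟩ := ho
  rw [card_primeFactors_sq_sub_one_of_odd] at h
  obtain rfl | rfl | hm : m = 0 ∨ m = 1 ∨ 2 ≤ m := by omega
  · exact absurd hq not_isPrimePow_one
  · simp
  obtain ⟨hm₁, hm₂⟩ := isPrimePow_of_card_primeFactors_add_le_two hm (by omega) h
  rcases Nat.even_or_odd m with he | ho
  · obtain ⟨a, rfl⟩ := hm₁.exists_eq_two_pow_of_even he
    have ha : a ≠ 0 := by rintro rfl; simp at hm
    rw [← pow_succ'] at hq
    have := le_three_of_isPrimePow_two_pow_add_one_of_isPrimePow_two_pow_succ_add_one ha hm₂ hq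
    interval_cases a <;> simp at ha ⊢
  · obtain ⟨a, ha⟩ := hm₂.exists_eq_two_pow_of_even ho.add_one
    have hm_eq : m = 2 ^ a - 1 := by omega
    have ha₂ : 2 ≤ a := by
      by_contra! ha₂
      interval_cases a <;> omega
    rw [show 2 * m + 1 = 2 ^ (a + 1) - 1 by rw [pow_succ]; omega] at hq
    obtain rfl := eq_two_of_isPrimePow_two_pow_sub_one_of_isPrimePow_two_pow_succ_sub_one ha₂
      (hm_eq ▸ hm₁) hq
    simp [hm_eq]

end Nat

theorem primePow_sq_sub_one_two_primeFactors (q : ℕ) (hq : IsPrimePow q) :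
    (q ^ 2 - 1).primeFactors.card ≤ 2 ↔
      q ∈ ({2, 3, 4, 5, 7, 8, 9, 17} : Finset ℕ) := by
  constructor
  · intro h
    rcases Nat.even_or_odd q with he | ho
    · exact (by decide : ({2, 4, 8} : Finset ℕ) ⊆ {2, 3, 4, 5, 7, 8, 9, 17})
        (Nat.mem_of_card_primeFactors_sq_sub_one_le_two_of_even hq he h)
    · exact (by decide : ({3, 5, 7, 9, 17} : Finset ℕ) ⊆ {2, 3, 4, 5, 7, 8, 9, 17})
        (Nat.mem_of_card_primeFactors_sq_sub_one_le_two_of_odd hq ho h)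
  · intro h
    simp only [mem_insert, mem_singleton] at h
    rcases h with rfl | rfl | rfl | rfl | rfl | rfl | rfl | rfl <;>
      simp [Nat.primeFactors, Nat.primeFactorsList_ofNat]
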